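/- arXiv:1311.0381 — 5 statements merged into one kernel-verified Lean document; each statement's English description precedes it below -/
import Mathlib

section
/- A finite-dimensional real vector space V admitting a linear endomorphism J of V ⊕ V* with J² = -Id and J + J* = 0 (with respect to the canonical neutral pairing) must be even dimensional. -/
/-- The canonical neutral pairing on `V ⊕ V*`: `⟨X+α, Y+β⟩ = ½(β(X) + α(Y))`. -/
noncomputable def pair {V : Type*} [AddCommGroup V] [Module ℝ V]
    (u v : V × Module.Dual ℝ V) : ℝ := (v.2 u.1 + u.2 v.1) / 2

/-!
Let `Q (X + α) = α X` be the quadratic form of the pairing. Skew-adjointness and `J² = -1` make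
`J` an isometry of `Q` with `v ⟂ J v`, so a maximal `J`-invariant subspace `P` on which `Q` is
positive definite cannot have a positive vector `v` in its orthogonal complement: `P` could be
enlarged by `span {v, J v}`. Hence `dim P` is the positive index of inertia of `Q`, and it is even
because `J` restricts to a complex structure on `P`. That index is `dim V`, since `Q` is
nondegenerate on a `2 dim V`-dimensional space and vanishes on the `dim V`-dimensional subspace
`V`.
-/

open Module QuadraticMap

theorem even_finrank_of_apply_apply_eq_neg {𝕜 M : Type*} [Field 𝕜] [LinearOrder 𝕜]
    [IsStrictOrderedRing 𝕜] [AddCommGroup M] [Module 𝕜 M]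
    (J : M →ₗ[𝕜] M) (hJ : ∀ x, J (J x) = -x) : Even (finrank 𝕜 M) := by
  have hdet : LinearMap.det J * LinearMap.det J = (-1) ^ finrank 𝕜 M := by
    rw [← LinearMap.det_comp, show J ∘ₗ J = (-1 : 𝕜) • LinearMap.id by ext; simp [hJ],
      LinearMap.det_smul, LinearMap.det_id, mul_one]
  by_contra hodd
  rw [(Nat.not_even_iff_odd.mp hodd).neg_one_pow] at hdet
  nlinarith [mul_self_nonneg (LinearMap.det J)]

lemma span_pair_mem_invtSubmodule {R M : Type*} [CommRing R] [AddCommGroup M] [Module R M]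
    {J : M →ₗ[R] M} (hJ : ∀ x, J (J x) = -x) (v : M) :
    Submodule.span R {v, J v} ∈ Module.End.invtSubmodule J := by
  refine (Module.End.mem_invtSubmodule_iff_map_le J).mpr ?_
  rw [Submodule.map_span_le]
  rintro x (rfl | rfl)
  · exact Submodule.subset_span (by simp)
  · rw [hJ]
    exact Submodule.neg_mem _ (Submodule.subset_span (by simp))

namespace QuadraticForm

lemma polar_map_left_of_isSkewAdjoint {R M : Type*} [CommRing R] [AddCommGroup M] [Module R M]
    {Q : QuadraticForm R M} {J : M →ₗ[R] M} (hskew : (polarBilin Q).IsSkewAdjoint J)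
    (x y : M) : polar Q (J x) y = -polar Q x (J y) := by
  simpa [polar_neg_right] using hskew x y

lemma radical_dualProd {𝕜 V : Type*} [Field 𝕜] [AddCommGroup V] [Module 𝕜 V] :
    (dualProd 𝕜 V).radical = ⊥ := by
  refine (Submodule.eq_bot_iff _).mpr fun ⟨f, x⟩ hu ↦ ?_
  have h : ∀ w, polar (dualProd 𝕜 V) (f, x) w = 0 := fun w ↦
    LinearMap.congr_fun (radical_le_ker_polarBilin hu) w
  simp only [polar, dualProd_apply, Prod.fst_add, Prod.snd_add, LinearMap.add_apply, map_add] at h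
  refine Prod.ext (LinearMap.ext fun y ↦ ?_) ((forall_dual_apply_eq_zero_iff 𝕜 x).mp fun g ↦ ?_)
  · simpa using h (0, y)
  · simpa using h (g, 0)

variable {𝕜 M : Type*} [Field 𝕜] [LinearOrder 𝕜] [AddCommGroup M] [Module 𝕜 M]
  {Q : QuadraticForm 𝕜 M}

lemma exists_pos_mem_orthogonal_of_finrank_lt_sigPos [FiniteDimensional 𝕜 M]
    {P : Submodule 𝕜 M} (hP : finrank 𝕜 P < sigPos Q) :
    ∃ v ∈ LinearMap.BilinForm.orthogonal (polarBilin Q) P, 0 < Q v := by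
  by_contra! hneg
  have h₁ := sigPos_add_finrank_le_of_nonpos hneg
  have h₂ := LinearMap.BilinForm.finrank_add_finrank_orthogonal' (B := polarBilin Q) P
  omega

variable [IsStrictOrderedRing 𝕜]

lemma posDef_restrict_sup {P S : Submodule 𝕜 M} (hP : (Q.restrict P).PosDef)
    (hS : (Q.restrict S).PosDef) (hPS : S ≤ LinearMap.BilinForm.orthogonal (polarBilin Q) P) :
    (Q.restrict (P ⊔ S)).PosDef := by
  rintro ⟨x, hx⟩ hx0
  obtain ⟨p, hp, s, hs, rfl⟩ := Submodule.mem_sup.mp hx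
  have hps : polar Q p s = 0 := hPS hs p hp
  have hQp := hP.le_zero_iff (x := ⟨p, hp⟩)
  have hQs := hS.le_zero_iff (x := ⟨s, hs⟩)
  simp only [restrict_apply, Submodule.mk_eq_zero] at hQp hQs ⊢
  rw [QuadraticMap.map_add Q p s, hps, add_zero]
  by_contra! hle
  have hp₀ : 0 ≤ Q p := hP.nonneg ⟨p, hp⟩
  have hs₀ : 0 ≤ Q s := hS.nonneg ⟨s, hs⟩
  obtain rfl := hQp.mp (by linarith)
  obtain rfl := hQs.mp (by linarith)
  simp at hx0

section SkewAdjoint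

variable {J : M →ₗ[𝕜] M}

lemma polar_self_map_of_isSkewAdjoint (hskew : (polarBilin Q).IsSkewAdjoint J) (x : M) :
    polar Q x (J x) = 0 := by
  have := polar_map_left_of_isSkewAdjoint hskew x x
  rw [polar_comm] at this
  linarith

lemma map_apply_of_isSkewAdjoint (hskew : (polarBilin Q).IsSkewAdjoint J)
    (hJ : ∀ x, J (J x) = -x) (x : M) : Q (J x) = Q x := by
  have h : polar Q (J x) (J x) = polar Q x x := by
    rw [polar_map_left_of_isSkewAdjoint hskew, hJ, polar_neg_right, neg_neg]
  rw [polar_self, polar_self] at h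
  simpa using h

lemma span_pair_le_orthogonal (hskew : (polarBilin Q).IsSkewAdjoint J)
    {P : Submodule 𝕜 M} (hP : P ∈ Module.End.invtSubmodule J) {v : M}
    (hv : v ∈ LinearMap.BilinForm.orthogonal (polarBilin Q) P) :
    Submodule.span 𝕜 {v, J v} ≤ LinearMap.BilinForm.orthogonal (polarBilin Q) P := by
  refine Submodule.span_le.mpr (Set.insert_subset hv (Set.singleton_subset_iff.mpr ?_))
  intro p hp
  have hJp : polar Q (J p) v = 0 := hv (J p) (hP hp)
  show polar Q p (J v) = 0
  linarith [polar_map_left_of_isSkewAdjoint hskew p v]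

lemma posDef_restrict_span_pair (hskew : (polarBilin Q).IsSkewAdjoint J)
    (hJ : ∀ x, J (J x) = -x) {v : M} (hv : 0 < Q v) :
    (Q.restrict (Submodule.span 𝕜 {v, J v})).PosDef := by
  rintro ⟨x, hx⟩ hx0
  obtain ⟨a, c, rfl⟩ := Submodule.mem_span_pair.mp hx
  have hQ : Q (a • v + c • J v) = (a * a + c * c) * Q v := by
    rw [QuadraticMap.map_add Q, QuadraticMap.map_smul, QuadraticMap.map_smul, polar_smul_left,
      polar_smul_right, polar_self_map_of_isSkewAdjoint hskew,
      map_apply_of_isSkewAdjoint hskew hJ]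
    simp only [smul_eq_mul]
    ring
  have hac : a ≠ 0 ∨ c ≠ 0 := by
    by_contra! h
    obtain ⟨rfl, rfl⟩ := h
    simp at hx0
  simp only [restrict_apply, hQ]
  refine mul_pos ?_ hv
  rcases hac with h | h
  · exact add_pos_of_pos_of_nonneg (mul_self_pos.mpr h) (mul_self_nonneg c)
  · exact add_pos_of_nonneg_of_pos (mul_self_nonneg a) (mul_self_pos.mpr h)

theorem even_sigPos_of_isSkewAdjoint [FiniteDimensional 𝕜 M]
    (hskew : (polarBilin Q).IsSkewAdjoint J) (hJ : ∀ x, J (J x) = -x) : Even (sigPos Q) := by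
  obtain ⟨P, ⟨hPJ, hPpos⟩, hPmax⟩ := exists_maximal_of_wellFoundedGT
    (fun P : Submodule 𝕜 M ↦ P ∈ Module.End.invtSubmodule J ∧ (Q.restrict P).PosDef)
    ⟨⊥, Module.End.invtSubmodule.bot_mem J, fun x hx ↦ (hx (Subsingleton.elim x 0)).elim⟩
  have hP : finrank 𝕜 P = sigPos Q := by
    refine le_antisymm (le_sigPos_of_posDef Q hPpos) (not_lt.mp fun hlt ↦ ?_)
    obtain ⟨v, hv, hQv⟩ := exists_pos_mem_orthogonal_of_finrank_lt_sigPos hlt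
    have hvP : v ∉ P := fun hvP ↦ by
      have h : polar Q v v = 0 := hv v hvP
      simp only [polar_self, smul_eq_zero, two_ne_zero, false_or] at h
      exact hQv.ne' h
    have hmax := hPmax (y := P ⊔ Submodule.span 𝕜 {v, J v})
      ⟨Module.End.invtSubmodule.sup_mem hPJ (span_pair_mem_invtSubmodule hJ v),
        posDef_restrict_sup hPpos (posDef_restrict_span_pair hskew hJ hQv)
          (span_pair_le_orthogonal hskew hPJ hv)⟩ le_sup_left
    exact hvP (hmax (Submodule.mem_sup_right (Submodule.subset_span (by simp))))
  exact hP ▸ even_finrank_of_apply_apply_eq_neg (J.restrict hPJ) fun x ↦ Subtype.ext (hJ x)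

end SkewAdjoint

lemma sigPos_dualProd {V : Type*} [AddCommGroup V] [Module 𝕜 V] [FiniteDimensional 𝕜 V] :
    sigPos (dualProd 𝕜 V) = finrank 𝕜 V := by
  let L := LinearMap.range (LinearMap.inr 𝕜 (Dual 𝕜 V) V)
  have hL : finrank 𝕜 L = finrank 𝕜 V := LinearMap.finrank_range_of_inj LinearMap.inr_injective
  have hLiso : ∀ u ∈ L, dualProd 𝕜 V u = 0 := by
    rintro _ ⟨x, rfl⟩
    simp
  have hpos := sigPos_add_finrank_le_of_nonpos (V := L) fun u hu ↦ (hLiso u hu).le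
  have hneg := sigPos_add_finrank_le_of_nonpos (Q := -dualProd 𝕜 V) (V := L) fun u hu ↦ by
    simp [hLiso u hu]
  have hsum := sigPos_add_sigNeg_add_radical (Q := dualProd 𝕜 V)
  rw [radical_dualProd, finrank_bot] at hsum
  rw [sigPos_neg] at hneg
  rw [finrank_prod, Subspace.dual_finrank_eq] at hpos hneg hsum
  omega

end QuadraticForm

section Pairing

variable {V : Type*} [AddCommGroup V] [Module ℝ V]

variable (V) in
noncomputable def pairForm : QuadraticForm ℝ (V × Dual ℝ V) :=
  (QuadraticForm.dualProd ℝ V).comp (LinearEquiv.prodComm ℝ V (Dual ℝ V)).toLinearMap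

lemma pairForm_apply (u : V × Dual ℝ V) : pairForm V u = u.2 u.1 := rfl

lemma polar_pairForm (u v : V × Dual ℝ V) : polar (pairForm V) u v = 2 * pair u v := by
  simp only [polar, pairForm_apply, Prod.fst_add, Prod.snd_add, map_add, LinearMap.add_apply, pair]
  ring

lemma sigPos_pairForm [FiniteDimensional ℝ V] : sigPos (pairForm V) = finrank ℝ V :=
  (QuadraticMap.Equivalent.sigPos_eq ⟨QuadraticMap.isometryEquivOfCompLinearEquiv
    (QuadraticForm.dualProd ℝ V) (LinearEquiv.prodComm ℝ V (Dual ℝ V))⟩).symm.trans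
    QuadraticForm.sigPos_dualProd

end Pairing

/-- A vector space admitting a generalized almost complex structure
(`J² = -Id`, `J` skew-adjoint for the canonical pairing) is even dimensional. -/
theorem stmt1 {V : Type*} [AddCommGroup V] [Module ℝ V] [FiniteDimensional ℝ V]
    (J : (V × Module.Dual ℝ V) →ₗ[ℝ] (V × Module.Dual ℝ V))
    (hJ2 : ∀ u, J (J u) = -u)
    (hskew : ∀ u v, pair (J u) v + pair u (J v) = 0) :
    Even (Module.finrank ℝ V) := by
  have hJskew : (polarBilin (pairForm V)).IsSkewAdjoint J := fun u v ↦ by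
    simp only [polarBilin_apply_apply, Pi.neg_apply, polar_neg_right, polar_pairForm]
    linarith [hskew u v]
  exact sigPos_pairForm (V := V) ▸ QuadraticForm.even_sigPos_of_isSkewAdjoint hJskew hJ2
end

section
/- Let (Φ, E₊, E₋) be a generalized almost contact structure on a vector space V. Then the kernel of Φ equals the span of E₊ and E₋. -/
theorem stmt6 {V : Type*} [AddCommGroup V] [Module ℝ V] [FiniteDimensional ℝ V]
    (Φ : (V × Module.Dual ℝ V) →ₗ[ℝ] (V × Module.Dual ℝ V))
    (Ep Em : V × Module.Dual ℝ V)
    (hskew : ∀ u v, pair (Φ u) v + pair u (Φ v) = 0)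
    (hsq : ∀ u, Φ (Φ u) = -u + (2 * pair Em u) • Ep + (2 * pair Ep u) • Em)
    (hpp : pair Ep Ep = 0) (hmm : pair Em Em = 0)
    (hpm : 2 * pair Ep Em = 1) :
    LinearMap.ker Φ = Submodule.span ℝ {Ep, Em} := by
  have psymm : ∀ u v : V × Module.Dual ℝ V, pair u v = pair v u := by
    intro u v; simp only [pair]; ring
  have hself : ∀ u, pair u (Φ u) = 0 := by
    intro u
    have h1 := hskew u u
    have h2 := psymm (Φ u) u
    linarith
  have hmp : 2 * pair Em Ep = 1 := by rw [psymm Em Ep]; exact hpm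
  have hEpne : Ep ≠ 0 := by
    intro h
    rw [h] at hpm
    simp [pair] at hpm
  have hEmne : Em ≠ 0 := by
    intro h
    rw [h] at hpm
    simp [pair] at hpm
  have hΦ2Ep : Φ (Φ Ep) = 0 := by
    rw [hsq, hmp, hpp]
    simp
  have hΦ2Em : Φ (Φ Em) = 0 := by
    rw [hsq, hmm, hpm]
    simp
  have hΦEp : Φ Ep = 0 := by
    have h := hsq (Φ Ep)
    rw [hΦ2Ep, hself Ep, map_zero] at h
    -- 0 = -Φ Ep + (2 * pair Em (Φ Ep)) • Ep + (2 * 0) • Em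
    set a : ℝ := pair Em (Φ Ep) with ha
    have hw : Φ Ep = (2 * a) • Ep := by
      have := h.symm
      rw [mul_zero, zero_smul, add_zero] at this
      linear_combination (norm := module) -this
    have h0 : (2 * a) • Φ Ep = 0 := by rw [← map_smul, ← hw, hΦ2Ep]
    rw [hw, smul_smul, smul_eq_zero] at h0
    rcases h0 with h0 | h0
    · have : a = 0 := by nlinarith
      rw [hw, this]; simp
    · exact absurd h0 hEpne
  have hΦEm : Φ Em = 0 := by
    have h := hsq (Φ Em)
    rw [hΦ2Em, hself Em, map_zero] at h
    set a : ℝ := pair Ep (Φ Em) with ha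
    have hw : Φ Em = (2 * a) • Em := by
      have := h.symm
      rw [mul_zero, zero_smul, add_zero] at this
      linear_combination (norm := module) -this
    have h0 : (2 * a) • Φ Em = 0 := by rw [← map_smul, ← hw, hΦ2Em]
    rw [hw, smul_smul, smul_eq_zero] at h0
    rcases h0 with h0 | h0
    · have : a = 0 := by nlinarith
      rw [hw, this]; simp
    · exact absurd h0 hEmne
  apply le_antisymm
  · intro u hu
    have hu0 : Φ u = 0 := hu
    have h := hsq u
    rw [hu0, map_zero] at h
    have hu' : u = (2 * pair Em u) • Ep + (2 * pair Ep u) • Em := by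
      linear_combination (norm := module) h
    rw [hu']
    exact Submodule.add_mem _
      (Submodule.smul_mem _ _ (Submodule.subset_span (by simp)))
      (Submodule.smul_mem _ _ (Submodule.subset_span (by simp)))
  · rw [Submodule.span_le]
    intro x hx
    rcases hx with h | h
    · simp [LinearMap.mem_ker, h, hΦEp]
    · simp only [Set.mem_singleton_iff] at h
      simp [LinearMap.mem_ker, h, hΦEm]
end

section
/- Let (Φᵢ, E₊,ᵢ, E₋,ᵢ) for i = 1,2 be generalized almost contact structures on vector spaces V₁ and V₂. Define 𝒥 on (V₁ ⊕ V₁*) ⊕ (V₂ ⊕ V₂*) by 𝒥(u₁, u₂) = (Φ₁(u₁) - 2⟨E₊,₂, u₂⟩E₊,₁ - 2⟨E₋,₂, u₂⟩E₋,₁, Φ₂(u₂) + 2⟨E₊,₁, u₁⟩E₊,₂ + 2⟨E₋,₁, u₁⟩E₋,₂). Then 𝒥² = -Id. -/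
section aux
variable {V : Type*} [AddCommGroup V] [Module ℝ V]

lemma pair_comm (u v : V × Module.Dual ℝ V) : pair u v = pair v u := by
  simp [pair]; ring

@[simp] lemma pair_zero_left (v : V × Module.Dual ℝ V) : pair 0 v = 0 := by
  simp [pair]

@[simp] lemma pair_zero_right (v : V × Module.Dual ℝ V) : pair v 0 = 0 := by
  simp [pair]

@[simp] lemma pair_add_right (u v w : V × Module.Dual ℝ V) :
    pair u (v + w) = pair u v + pair u w := by
  simp [pair]; ring

@[simp] lemma pair_sub_right (u v w : V × Module.Dual ℝ V) :
    pair u (v - w) = pair u v - pair u w := by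
  simp [pair]; ring

@[simp] lemma pair_neg_right (u v : V × Module.Dual ℝ V) :
    pair u (-v) = -pair u v := by
  simp [pair]; ring

@[simp] lemma pair_smul_right (c : ℝ) (u v : V × Module.Dual ℝ V) :
    pair u (c • v) = c * pair u v := by
  simp [pair]; ring

lemma phi_E_eq_zero (Φ : (V × Module.Dual ℝ V) →ₗ[ℝ] (V × Module.Dual ℝ V))
    (Ep Em : V × Module.Dual ℝ V)
    (hskew : ∀ u v, pair (Φ u) v + pair u (Φ v) = 0)
    (hsq : ∀ u, Φ (Φ u) = -u + (2 * pair Em u) • Ep + (2 * pair Ep u) • Em)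
    (hpp : pair Ep Ep = 0) (hpm : 2 * pair Ep Em = 1) :
    Φ Ep = 0 := by
  have hsqEp : Φ (Φ Ep) = 0 := by
    rw [hsq Ep, pair_comm Em Ep, hpm, hpp]
    simp
  -- pair Ep (Φ Ep) = 0
  have hself : pair Ep (Φ Ep) = 0 := by
    have h := hskew Ep Ep
    rw [pair_comm (Φ Ep) Ep] at h
    linarith
  -- Φ³ Ep = 0 gives Φ Ep = c • Ep
  have hc : Φ Ep = (2 * pair Em (Φ Ep)) • Ep := by
    have h3 : Φ (Φ (Φ Ep)) = 0 := by rw [hsqEp]; simp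
    have h2 := hsq (Φ Ep)
    rw [h3, hself] at h2
    have := h2.symm
    rw [mul_zero, zero_smul, add_zero, neg_add_eq_sub] at this
    exact (sub_eq_zero.mp this).symm
  set c := 2 * pair Em (Φ Ep) with hcdef
  have hc2 : (c * c) • Ep = (0 : V × Module.Dual ℝ V) := by
    have : Φ (Φ Ep) = (c * c) • Ep := by
      rw [hc, map_smul, hc, smul_smul]
    rw [← this, hsqEp]
  rcases smul_eq_zero.mp hc2 with h | h
  · rcases mul_self_eq_zero.mp h with h0
    rw [hc, h0, zero_smul]
  · rw [hc, h, smul_zero]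

end aux

/-- The product construction from two generalized almost contact structures
squares to `-Id`. -/
theorem stmt11 {V₁ V₂ : Type*} [AddCommGroup V₁] [Module ℝ V₁] [FiniteDimensional ℝ V₁]
    [AddCommGroup V₂] [Module ℝ V₂] [FiniteDimensional ℝ V₂]
    (Φ₁ : (V₁ × Module.Dual ℝ V₁) →ₗ[ℝ] (V₁ × Module.Dual ℝ V₁))
    (Ep₁ Em₁ : V₁ × Module.Dual ℝ V₁)
    (hskew₁ : ∀ u v, pair (Φ₁ u) v + pair u (Φ₁ v) = 0)
    (hsq₁ : ∀ u, Φ₁ (Φ₁ u) = -u + (2 * pair Em₁ u) • Ep₁ + (2 * pair Ep₁ u) • Em₁)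
    (hpp₁ : pair Ep₁ Ep₁ = 0) (hmm₁ : pair Em₁ Em₁ = 0) (hpm₁ : 2 * pair Ep₁ Em₁ = 1)
    (Φ₂ : (V₂ × Module.Dual ℝ V₂) →ₗ[ℝ] (V₂ × Module.Dual ℝ V₂))
    (Ep₂ Em₂ : V₂ × Module.Dual ℝ V₂)
    (hskew₂ : ∀ u v, pair (Φ₂ u) v + pair u (Φ₂ v) = 0)
    (hsq₂ : ∀ u, Φ₂ (Φ₂ u) = -u + (2 * pair Em₂ u) • Ep₂ + (2 * pair Ep₂ u) • Em₂)
    (hpp₂ : pair Ep₂ Ep₂ = 0) (hmm₂ : pair Em₂ Em₂ = 0) (hpm₂ : 2 * pair Ep₂ Em₂ = 1)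
    (𝒥 : ((V₁ × Module.Dual ℝ V₁) × (V₂ × Module.Dual ℝ V₂)) →ₗ[ℝ]
         ((V₁ × Module.Dual ℝ V₁) × (V₂ × Module.Dual ℝ V₂)))
    (h𝒥 : ∀ u, 𝒥 u =
      (Φ₁ u.1 - (2 * pair Ep₂ u.2) • Ep₁ - (2 * pair Em₂ u.2) • Em₁,
       Φ₂ u.2 + (2 * pair Ep₁ u.1) • Ep₂ + (2 * pair Em₁ u.1) • Em₂)) :
    ∀ u, 𝒥 (𝒥 u) = -u := by
  have hEp1 : Φ₁ Ep₁ = 0 := phi_E_eq_zero Φ₁ Ep₁ Em₁ hskew₁ hsq₁ hpp₁ hpm₁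
  have hEm1 : Φ₁ Em₁ = 0 := by
    refine phi_E_eq_zero Φ₁ Em₁ Ep₁ hskew₁ (fun u => ?_) hmm₁ (by rw [pair_comm]; exact hpm₁)
    rw [hsq₁ u]; abel
  have hEp2 : Φ₂ Ep₂ = 0 := phi_E_eq_zero Φ₂ Ep₂ Em₂ hskew₂ hsq₂ hpp₂ hpm₂
  have hEm2 : Φ₂ Em₂ = 0 := by
    refine phi_E_eq_zero Φ₂ Em₂ Ep₂ hskew₂ (fun u => ?_) hmm₂ (by rw [pair_comm]; exact hpm₂)
    rw [hsq₂ u]; abel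
  -- pair of E's with images of Φ vanish
  have hp2 : ∀ w, pair Ep₂ (Φ₂ w) = 0 := fun w => by
    have h := hskew₂ Ep₂ w; rw [hEp2, pair_zero_left] at h; linarith
  have hm2 : ∀ w, pair Em₂ (Φ₂ w) = 0 := fun w => by
    have h := hskew₂ Em₂ w; rw [hEm2, pair_zero_left] at h; linarith
  have hp1 : ∀ w, pair Ep₁ (Φ₁ w) = 0 := fun w => by
    have h := hskew₁ Ep₁ w; rw [hEp1, pair_zero_left] at h; linarith
  have hm1 : ∀ w, pair Em₁ (Φ₁ w) = 0 := fun w => by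
    have h := hskew₁ Em₁ w; rw [hEm1, pair_zero_left] at h; linarith
  intro u
  rw [h𝒥, h𝒥]
  have hmp1 : pair Em₁ Ep₁ = pair Ep₁ Em₁ := pair_comm _ _
  have hmp2 : pair Em₂ Ep₂ = pair Ep₂ Em₂ := pair_comm _ _
  have e1 : pair Ep₁ Em₁ = 1/2 := by linarith
  have e2 : pair Ep₂ Em₂ = 1/2 := by linarith
  refine Prod.ext ?_ ?_ <;>
  · simp only [map_sub, map_add, map_smul, hsq₁ u.1, hsq₂ u.2, hEp1, hEm1, hEp2, hEm2,
      pair_add_right, pair_sub_right, pair_smul_right, hp1, hm1, hp2, hm2,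
      hpp₁, hmm₁, hpp₂, hmm₂, hmp1, hmp2, e1, e2, smul_zero, mul_zero,
      Prod.fst_neg, Prod.snd_neg]
    module
end

section
/- Let (Φᵢ, E₊,ᵢ, E₋,ᵢ) for i = 1,2 be generalized almost contact structures on vector spaces V₁ and V₂. Define 𝒥 on (V₁ ⊕ V₁*) ⊕ (V₂ ⊕ V₂*) by 𝒥(u₁, u₂) = (Φ₁(u₁) - 2⟨E₊,₂, u₂⟩E₊,₁ - 2⟨E₋,₂, u₂⟩E₋,₁, Φ₂(u₂) + 2⟨E₊,₁, u₁⟩E₊,₂ + 2⟨E₋,₁, u₁⟩E₋,₂). Then 𝒥 is skew-adjoint with respect to the direct sum pairing: ⟨𝒥(u), v⟩ + ⟨u, 𝒥(v)⟩ = 0 for all u, v. -/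
/-- The product construction from two generalized almost contact structures
is skew-adjoint for the direct sum pairing. -/
theorem stmt12 {V₁ V₂ : Type*} [AddCommGroup V₁] [Module ℝ V₁] [FiniteDimensional ℝ V₁]
    [AddCommGroup V₂] [Module ℝ V₂] [FiniteDimensional ℝ V₂]
    (Φ₁ : (V₁ × Module.Dual ℝ V₁) →ₗ[ℝ] (V₁ × Module.Dual ℝ V₁))
    (Ep₁ Em₁ : V₁ × Module.Dual ℝ V₁)
    (hskew₁ : ∀ u v, pair (Φ₁ u) v + pair u (Φ₁ v) = 0)
    (hsq₁ : ∀ u, Φ₁ (Φ₁ u) = -u + (2 * pair Em₁ u) • Ep₁ + (2 * pair Ep₁ u) • Em₁)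
    (hpp₁ : pair Ep₁ Ep₁ = 0) (hmm₁ : pair Em₁ Em₁ = 0) (hpm₁ : 2 * pair Ep₁ Em₁ = 1)
    (Φ₂ : (V₂ × Module.Dual ℝ V₂) →ₗ[ℝ] (V₂ × Module.Dual ℝ V₂))
    (Ep₂ Em₂ : V₂ × Module.Dual ℝ V₂)
    (hskew₂ : ∀ u v, pair (Φ₂ u) v + pair u (Φ₂ v) = 0)
    (hsq₂ : ∀ u, Φ₂ (Φ₂ u) = -u + (2 * pair Em₂ u) • Ep₂ + (2 * pair Ep₂ u) • Em₂)
    (hpp₂ : pair Ep₂ Ep₂ = 0) (hmm₂ : pair Em₂ Em₂ = 0) (hpm₂ : 2 * pair Ep₂ Em₂ = 1)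
    (𝒥 : ((V₁ × Module.Dual ℝ V₁) × (V₂ × Module.Dual ℝ V₂)) →ₗ[ℝ]
         ((V₁ × Module.Dual ℝ V₁) × (V₂ × Module.Dual ℝ V₂)))
    (h𝒥 : ∀ u, 𝒥 u =
      (Φ₁ u.1 - (2 * pair Ep₂ u.2) • Ep₁ - (2 * pair Em₂ u.2) • Em₁,
       Φ₂ u.2 + (2 * pair Ep₁ u.1) • Ep₂ + (2 * pair Em₁ u.1) • Em₂)) :
    ∀ u v, (pair (𝒥 u).1 v.1 + pair (𝒥 u).2 v.2) + (pair u.1 (𝒥 v).1 + pair u.2 (𝒥 v).2) = 0 := by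
  intro u v
  have h1 := hskew₁ u.1 v.1
  have h2 := hskew₂ u.2 v.2
  rw [h𝒥 u, h𝒥 v]
  simp only [pair, Prod.fst_sub, Prod.snd_sub, Prod.fst_add, Prod.snd_add, Prod.smul_fst,
    Prod.smul_snd, LinearMap.sub_apply, LinearMap.add_apply, LinearMap.smul_apply,
    map_sub, map_add, map_smul, smul_eq_mul] at *
  linear_combination h1 + h2
end

section
/- Let (Φ, E₊, E₋) be a generalized almost contact structure on a vector space V₁ and let 𝒥 be a generalized almost complex structure on a vector space V₂. Define Ψ on (V₁ ⊕ V₁*) ⊕ (V₂ ⊕ V₂*) by Ψ(u₁, u₂) = (Φ(u₁), 𝒥(u₂)), and set Ẽ₊ = (E₊, 0), Ẽ₋ = (E₋, 0). Then (Ψ, Ẽ₊, Ẽ₋) is a generalized almost contact structure on V₁ × V₂: Ψ + Ψ* = 0, Ψ²(u) = -u + 2⟨Ẽ₋,u⟩Ẽ₊ + 2⟨Ẽ₊,u⟩Ẽ₋, ⟨Ẽ±,Ẽ±⟩ = 0, and 2⟨Ẽ₊,Ẽ₋⟩ = 1. -/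
/-- The direct sum pairing on `(V₁ ⊕ V₁*) ⊕ (V₂ ⊕ V₂*)`. -/
noncomputable def pairProd {V₁ V₂ : Type*} [AddCommGroup V₁] [Module ℝ V₁]
    [AddCommGroup V₂] [Module ℝ V₂]
    (u v : (V₁ × Module.Dual ℝ V₁) × (V₂ × Module.Dual ℝ V₂)) : ℝ :=
  pair u.1 v.1 + pair u.2 v.2

/-- A generalized almost contact structure on `V₁` and a generalized almost complex
structure on `V₂` combine to a generalized almost contact structure
`Ψ(u₁,u₂) = (Φ(u₁), 𝒥(u₂))` with `Ẽ₊ = (E₊,0)`, `Ẽ₋ = (E₋,0)` on the product. -/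
theorem stmt13 {V₁ V₂ : Type*} [AddCommGroup V₁] [Module ℝ V₁] [FiniteDimensional ℝ V₁]
    [AddCommGroup V₂] [Module ℝ V₂] [FiniteDimensional ℝ V₂]
    (Φ : (V₁ × Module.Dual ℝ V₁) →ₗ[ℝ] (V₁ × Module.Dual ℝ V₁))
    (Ep Em : V₁ × Module.Dual ℝ V₁)
    (hskew : ∀ u v, pair (Φ u) v + pair u (Φ v) = 0)
    (hsq : ∀ u, Φ (Φ u) = -u + (2 * pair Em u) • Ep + (2 * pair Ep u) • Em)
    (hpp : pair Ep Ep = 0) (hmm : pair Em Em = 0) (hpm : 2 * pair Ep Em = 1)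
    (𝒥 : (V₂ × Module.Dual ℝ V₂) →ₗ[ℝ] (V₂ × Module.Dual ℝ V₂))
    (h𝒥2 : ∀ u, 𝒥 (𝒥 u) = -u)
    (h𝒥skew : ∀ u v, pair (𝒥 u) v + pair u (𝒥 v) = 0)
    (Ψ : ((V₁ × Module.Dual ℝ V₁) × (V₂ × Module.Dual ℝ V₂)) →ₗ[ℝ]
         ((V₁ × Module.Dual ℝ V₁) × (V₂ × Module.Dual ℝ V₂)))
    (hΨ : ∀ u, Ψ u = (Φ u.1, 𝒥 u.2))
    (tEp tEm : (V₁ × Module.Dual ℝ V₁) × (V₂ × Module.Dual ℝ V₂))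
    (htEp : tEp = (Ep, 0)) (htEm : tEm = (Em, 0)) :
    (∀ u v, pairProd (Ψ u) v + pairProd u (Ψ v) = 0) ∧
    (∀ u, Ψ (Ψ u) = -u + (2 * pairProd tEm u) • tEp + (2 * pairProd tEp u) • tEm) ∧
    pairProd tEp tEp = 0 ∧ pairProd tEm tEm = 0 ∧ 2 * pairProd tEp tEm = 1 := by
  subst htEp htEm
  have pz : ∀ (v : V₂ × Module.Dual ℝ V₂), pair (0 : V₂ × Module.Dual ℝ V₂) v = 0 := by
    intro v; simp [pair]
  refine ⟨?_, ?_, ?_, ?_, ?_⟩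
  · intro u v
    simp only [hΨ, pairProd]
    have h1 := hskew u.1 v.1
    have h2 := h𝒥skew u.2 v.2
    linarith
  · intro u
    have : Ψ (Ψ u) = (Φ (Φ u.1), 𝒥 (𝒥 u.2)) := by rw [hΨ, hΨ]
    rw [this, hsq u.1, h𝒥2 u.2]
    simp only [pairProd, pz, add_zero]
    ext <;> simp [Prod.add_def]
  · simp [pairProd, pz, hpp]
  · simp [pairProd, pz, hmm]
  · simpa [pairProd, pz] using hpm
end
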